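/- For all n ≥ 1, the following identity holds in ℚ(q)[x]: C_n(qx+1 | q) = Σ_{j=0}^{n-1} f(n+j, n-1-j | q^{-1}) · q^{jn + n(n+1)/2 - (j+1)(j+2)/2} · (x choose j)_q. -/

import Mathlib

open Polynomial Finset

/-- The indeterminate `q`, as an element of the field of rational functions `ℚ(q)`. -/
noncomputable def qq : RatFunc ℚ := RatFunc.X

/-- The Carlitz–Riordan `q`-ballot numbers `f(n,k|q) ∈ ℤ[q]`:
`f(0,0|q) = 1`, `f(n,k|q) = 0` for `k > n`, and
`f(n,k|q) = q·f(n,k-1|q) + q^k·f(n-1,k|q)` for `n ≥ k ≥ 0`, `(n,k) ≠ (0,0)`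
(with `f(n,-1|q) = 0`, so `f(n,0|q) = f(n-1,0|q)`). -/
noncomputable def fq : ℕ → ℕ → Polynomial ℤ
  | 0, 0 => 1
  | 0, _ + 1 => 0
  | n + 1, 0 => fq n 0
  | n + 1, k + 1 =>
    if k + 1 ≤ n + 1 then
      Polynomial.X * fq (n + 1) k + Polynomial.X ^ (k + 1) * fq n (k + 1)
    else 0
  termination_by n k => (n, k)

/-- The `q`-integer `[k]_q = (q^k - 1)/(q - 1)` in `ℚ(q)`. -/
noncomputable def qint (k : ℕ) : RatFunc ℚ := (qq ^ k - 1) / (qq - 1)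

/-- The `q`-binomial polynomial `(x choose j)_q = x(x-[1]_q)⋯(x-[j-1]_q)/([1]_q⋯[j]_q)`
in `ℚ(q)[x]`. -/
noncomputable def qbinom (j : ℕ) : Polynomial (RatFunc ℚ) :=
  Polynomial.C (∏ i ∈ Finset.range j, qint (i + 1))⁻¹ *
    ∏ i ∈ Finset.range j, (Polynomial.X - Polynomial.C (qint i))

/-!
Write `D_n(x) = C_n(qx+1)` and `∇P(x) = P(qx+1) - P(x)`. Composing the defining recurrence with
`x ↦ qx+1` twice gives `∇D_{n+1} = q²(1 + (q-1)x) D_n(q(qx+1)+1)`, and `D_{n+1}([-2]_q) =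
C_{n+1}(-q⁻¹) = 0`. Since `q` is not a root of unity, `∇` kills only the constants, so these two
facts determine `D_{n+1}` from `D_n`. It remains to check them for the claimed expansion `E_n`.
In the basis `(x choose j)_q`, `∇` is a shift (`∇(x choose j+1)_q = (1 + (q-1)x)(x choose j)_q`)
and `x ↦ qx+1` is bidiagonal, so the first fact becomes a three-term recurrence for the
coefficients, which is two steps of the ballot recurrence. At `[-2]_q` the basis takes the values
`(-1)^j q^{-2j} [j+1]_q`, and the same recurrence makes the evaluation telescope to zero.
-/

lemma qq_ne_zero : qq ≠ 0 := RatFunc.X_ne_zero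

lemma qq_pow_ne_one {m : ℕ} (hm : m ≠ 0) : qq ^ m ≠ 1 := by
  intro h
  have hX : (X ^ m : ℚ[X]) = 1 :=
    RatFunc.algebraMap_injective ℚ (by simpa [qq, RatFunc.algebraMap_X] using h)
  simpa [hm] using congrArg (eval 0) hX

lemma qq_sub_one_ne_zero : qq - 1 ≠ 0 :=
  sub_ne_zero.2 (by simpa using qq_pow_ne_one one_ne_zero)

lemma qq_zpow_mul_zpow (m n : ℤ) : qq ^ m * qq ^ n = qq ^ (m + n) :=
  (zpow_add₀ qq_ne_zero m n).symm

lemma qq_zpow_mul_zpow_eq {a b c d : ℤ} (h : a + b = c + d) :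
    qq ^ a * qq ^ b = qq ^ c * qq ^ d := by
  rw [qq_zpow_mul_zpow, qq_zpow_mul_zpow, h]

lemma qint_zero : qint 0 = 0 := by simp [qint]

lemma qint_succ (m : ℕ) : qint (m + 1) = qq * qint m + 1 := by
  have := qq_sub_one_ne_zero
  simp only [qint]
  field_simp
  ring

lemma sub_one_mul_qint (m : ℕ) : (qq - 1) * qint m = qq ^ m - 1 :=
  mul_div_cancel₀ _ qq_sub_one_ne_zero

lemma qint_ne_zero {m : ℕ} (hm : m ≠ 0) : qint m ≠ 0 := by
  intro h
  apply qq_pow_ne_one hm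
  rw [← sub_eq_zero, ← sub_one_mul_qint, h, mul_zero]

lemma fq_eq_zero_of_lt : ∀ {a b : ℕ}, a < b → fq a b = 0
  | 0, _ + 1, _ => by rw [fq]
  | _ + 1, _ + 1, h => by rw [fq, if_neg (by omega)]

/-- `f(a,b|q⁻¹)`, extended by zero to all `(a, b) ∈ ℤ²` outside `0 ≤ b ≤ a`; with this
extension the ballot recurrence needs no boundary cases. -/
noncomputable def ballotInv (a b : ℤ) : RatFunc ℚ :=
  if 0 ≤ b ∧ b ≤ a then aeval qq⁻¹ (fq a.toNat b.toNat) else 0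

lemma ballotInv_natCast (a b : ℕ) : ballotInv a b = aeval qq⁻¹ (fq a b) := by
  rw [ballotInv]
  split_ifs with h
  · simp
  · rw [fq_eq_zero_of_lt (by omega), map_zero]

lemma ballotInv_of_neg {a b : ℤ} (hb : b < 0) : ballotInv a b = 0 :=
  if_neg (by omega)

lemma ballotInv_rec {a b : ℤ} (ha : 1 ≤ a) (hb : b ≤ a) :
    ballotInv a b = qq ^ (-1 : ℤ) * ballotInv a (b - 1) + qq ^ (-b) * ballotInv (a - 1) b := by
  obtain ⟨m, rfl⟩ : ∃ m : ℕ, a = m + 1 := ⟨(a - 1).toNat, by omega⟩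
  rw [add_sub_cancel_right]
  rcases lt_trichotomy b 0 with hb₀ | rfl | hb₀
  · rw [ballotInv_of_neg hb₀, ballotInv_of_neg (b := b - 1) (by omega), ballotInv_of_neg hb₀]
    ring
  · have h₁ : ballotInv ((m : ℤ) + 1) 0 = aeval qq⁻¹ (fq (m + 1) 0) := by
      exact_mod_cast ballotInv_natCast (m + 1) 0
    have h₂ : ballotInv (m : ℤ) 0 = aeval qq⁻¹ (fq m 0) := by
      exact_mod_cast ballotInv_natCast m 0
    rw [h₁, h₂, ballotInv_of_neg (b := 0 - 1) (by norm_num), fq]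
    simp
  · obtain ⟨k, rfl⟩ : ∃ k : ℕ, b = k + 1 := ⟨(b - 1).toNat, by omega⟩
    have h₁ : ballotInv ((m : ℤ) + 1) (k + 1) = aeval qq⁻¹ (fq (m + 1) (k + 1)) := by
      exact_mod_cast ballotInv_natCast (m + 1) (k + 1)
    have h₂ : ballotInv ((m : ℤ) + 1) (k + 1 - 1) = aeval qq⁻¹ (fq (m + 1) k) := by
      rw [add_sub_cancel_right]
      exact_mod_cast ballotInv_natCast (m + 1) k
    have h₃ : ballotInv (m : ℤ) (k + 1) = aeval qq⁻¹ (fq m (k + 1)) := by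
      exact_mod_cast ballotInv_natCast m (k + 1)
    rw [h₁, h₂, h₃, fq, if_pos (by omega), zpow_neg_one, ← Nat.cast_add_one, zpow_neg,
      zpow_natCast, ← inv_pow]
    simp

lemma ballotInv_rec_two {a b : ℤ} (ha : 0 ≤ a) (hb : b + 1 ≤ a) :
    ballotInv (a + 2) (b + 2) = qq ^ (-2 : ℤ) * ballotInv (a + 2) b +
      (qq ^ (-(b + 2)) + qq ^ (-(b + 3))) * ballotInv (a + 1) (b + 1) +
      qq ^ (-(2 * b + 4)) * ballotInv a (b + 2) := by
  have h₁ := ballotInv_rec (a := a + 2) (b := b + 2) (by omega) (by omega)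
  have h₂ := ballotInv_rec (a := a + 2) (b := b + 1) (by omega) (by omega)
  have h₃ := ballotInv_rec (a := a + 1) (b := b + 2) (by omega) (by omega)
  simp only [add_sub_cancel_right, show a + 2 - 1 = a + 1 by ring, show b + 2 - 1 = b + 1 by ring]
    at h₁ h₂ h₃
  rw [h₁, h₂, h₃]
  simp only [mul_add, add_mul, ← mul_assoc, qq_zpow_mul_zpow]
  ring_nf

def tri (m : ℤ) : ℤ := m * (m + 1) / 2

lemma tri_add_one (m : ℤ) : tri (m + 1) = tri m + (m + 1) := by
  rw [tri, tri, show (m + 1) * (m + 1 + 1) = m * (m + 1) + (m + 1) * 2 by ring,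
    Int.add_mul_ediv_right _ _ two_ne_zero]

def ballotExp (n j : ℤ) : ℤ := j * n + tri n - tri (j + 1)

lemma ballotExp_add_one_left (n j : ℤ) : ballotExp (n + 1) j = ballotExp n j + n + j + 1 := by
  rw [ballotExp, ballotExp, tri_add_one]
  ring

lemma ballotExp_add_one_right (n j : ℤ) : ballotExp n (j + 1) = ballotExp n j + n - j - 2 := by
  rw [ballotExp, ballotExp, tri_add_one (j + 1)]
  ring

/-- The coefficient of `(x choose j)_q` in the claimed expansion of `C_n(qx+1|q)`. -/
noncomputable def ballotCoeff (n : ℕ) (j : ℤ) : RatFunc ℚ :=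
  ballotInv (n + j) (n - 1 - j) * qq ^ ballotExp n j

lemma ballotCoeff_of_neg {n : ℕ} {j : ℤ} (hj : j < 0) : ballotCoeff n j = 0 := by
  rw [ballotCoeff, ballotInv, if_neg (by omega), zero_mul]

lemma ballotCoeff_of_le {n : ℕ} {j : ℤ} (hj : n ≤ j) : ballotCoeff n j = 0 := by
  rw [ballotCoeff, ballotInv, if_neg (by omega), zero_mul]

lemma ballotCoeff_succ (n j : ℕ) (h : 1 ≤ n + j) :
    ballotCoeff (n + 1) j = qq ^ (2 * j) * ballotCoeff n (j - 1) +
      (qq ^ (2 * j) + qq ^ (2 * j + 1)) * ballotCoeff n j +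
      qq ^ (2 * j + 1) * ballotCoeff n (j + 1) := by
  have hrec := ballotInv_rec_two (a := n + j - 1) (b := n - j - 2) (by omega) (by omega)
  have hprev := ballotExp_add_one_right n (j - 1)
  rw [sub_add_cancel] at hprev
  simp only [ballotCoeff, Nat.cast_add_one, ballotExp_add_one_left, ballotExp_add_one_right,
    show ballotExp n (j - 1) = ballotExp n j - n + j + 1 by linarith,
    show (n : ℤ) + 1 + j = n + j - 1 + 2 by ring,
    show (n : ℤ) + 1 - 1 - j = n - j - 2 + 2 by ring,
    hrec, ← zpow_natCast, Nat.cast_mul, Nat.cast_add_one]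
  set e := ballotExp n j
  have c₁ : qq ^ (-2 : ℤ) * qq ^ (e + n + j + 1) =
      qq ^ (2 * j + 1 : ℤ) * qq ^ (e + n - j - 2) :=
    qq_zpow_mul_zpow_eq (by ring)
  have c₂ : qq ^ (-(n - j : ℤ)) * qq ^ (e + n + j + 1) = qq ^ (2 * j + 1 : ℤ) * qq ^ e :=
    qq_zpow_mul_zpow_eq (by ring)
  have c₃ : qq ^ (-(n - j + 1 : ℤ)) * qq ^ (e + n + j + 1) = qq ^ (2 * j : ℤ) * qq ^ e :=
    qq_zpow_mul_zpow_eq (by ring)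
  have c₄ : qq ^ (-(2 * (n - j) : ℤ)) * qq ^ (e + n + j + 1) =
      qq ^ (2 * j : ℤ) * qq ^ (e - n + j + 1) :=
    qq_zpow_mul_zpow_eq (by ring)
  linear_combination (norm := ring_nf) ballotInv (n + j + 1) (n - j - 2) * c₁ +
    ballotInv (n + j) (n - j - 1) * (c₂ + c₃) + ballotInv (n + j - 1) (n - j) * c₄

lemma ballotCoeff_eq_of_lt {n j : ℕ} (h : j < n) :
    ballotCoeff n j = aeval qq⁻¹ (fq (n + j) (n - 1 - j)) *
      qq ^ (j * n + n * (n + 1) / 2 - (j + 1) * (j + 2) / 2) := by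
  have hle : (j + 1) * (j + 2) / 2 ≤ j * n + n * (n + 1) / 2 :=
    (Nat.div_le_div_right (Nat.mul_le_mul (by omega) (by omega))).trans (Nat.le_add_left _ _)
  have hexp : ballotExp n j = ((j * n + n * (n + 1) / 2 - (j + 1) * (j + 2) / 2 : ℕ) : ℤ) := by
    rw [Nat.cast_sub hle, ballotExp, tri, tri]
    push_cast
    ring_nf
  rw [ballotCoeff, hexp, zpow_natCast, ← ballotInv_natCast]
  congr 2
  omega

lemma qbinom_zero : qbinom 0 = 1 := by simp [qbinom]

lemma qbinom_succ (j : ℕ) :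
    qbinom (j + 1) = C (qint (j + 1))⁻¹ * (X - C (qint j)) * qbinom j := by
  simp only [qbinom, prod_range_succ, mul_inv, C_mul]
  ring

/-- `x ↦ qx + 1` sends `[m]_q` to `[m+1]_q`. -/
noncomputable def qsucc : Polynomial (RatFunc ℚ) := C qq * X + 1

noncomputable def qdiff (P : Polynomial (RatFunc ℚ)) : Polynomial (RatFunc ℚ) :=
  P.comp qsucc - P

lemma eval_qsucc (x : RatFunc ℚ) : qsucc.eval x = qq * x + 1 := by simp [qsucc]

lemma X_sub_C_qint_succ_comp_qsucc (i : ℕ) :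
    (X - C (qint (i + 1))).comp qsucc = C qq * (X - C (qint i)) := by
  rw [sub_comp, X_comp, C_comp, qsucc, qint_succ]
  simp only [C_add, C_mul, C_1]
  ring

lemma prod_X_sub_C_qint_comp_qsucc (j : ℕ) :
    (∏ i ∈ range (j + 1), (X - C (qint i))).comp qsucc =
      C qq ^ j * (∏ i ∈ range j, (X - C (qint i))) * qsucc := by
  rw [prod_range_succ', mul_comp, Polynomial.prod_comp,
    prod_congr rfl fun i _ => X_sub_C_qint_succ_comp_qsucc i, prod_mul_distrib, prod_const,
    card_range, qint_zero, C_0, sub_zero, X_comp]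

lemma qbinom_succ_comp_qsucc (j : ℕ) :
    (qbinom (j + 1)).comp qsucc = C (qq ^ (j + 1)) * qbinom (j + 1) + C (qq ^ j) * qbinom j := by
  have hc : C (∏ i ∈ range (j + 1), qint (i + 1))⁻¹ * C (qint (j + 1)) =
      C (∏ i ∈ range j, qint (i + 1))⁻¹ := by
    rw [← C_mul, prod_range_succ, mul_inv, mul_assoc,
      inv_mul_cancel₀ (qint_ne_zero j.succ_ne_zero), mul_one]
  have hsplit : qsucc = C qq * (X - C (qint j)) + C (qint (j + 1)) := by
    rw [qsucc, qint_succ]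
    simp only [C_add, C_mul, C_1]
    ring
  simp only [qbinom]
  rw [mul_comp, C_comp, prod_X_sub_C_qint_comp_qsucc, prod_range_succ (fun i => X - C (qint i)),
    hsplit]
  simp only [C_pow]
  linear_combination (C qq ^ j * ∏ i ∈ range j, (X - C (qint i))) * hc

lemma qdiff_qbinom_succ (j : ℕ) : qdiff (qbinom (j + 1)) = (1 + C (qq - 1) * X) * qbinom j := by
  have hlead : C (qq ^ (j + 1)) * C (qint (j + 1))⁻¹ - C (qint (j + 1))⁻¹ = C (qq - 1) := by
    rw [← C_mul, ← C_sub, ← sub_one_mul, ← sub_one_mul_qint,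
      mul_inv_cancel_right₀ (qint_ne_zero j.succ_ne_zero)]
  have hconst : C (qq - 1) * C (qint j) = C (qq ^ j) - 1 := by
    rw [← C_mul, sub_one_mul_qint, C_sub, C_1]
  rw [qdiff, qbinom_succ_comp_qsucc, qbinom_succ]
  linear_combination ((X - C (qint j)) * qbinom j) * hlead - qbinom j * hconst

/-- The `q`-integer `[-2]_q = (q⁻² - 1)/(q - 1)`. -/
noncomputable def qintNegTwo : RatFunc ℚ := -qq⁻¹ - qq⁻¹ ^ 2

lemma eval_qsucc_qintNegTwo : qsucc.eval qintNegTwo = -qq⁻¹ := by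
  have := qq_ne_zero
  rw [eval_qsucc, qintNegTwo]
  field_simp
  ring

lemma eval_qbinom_qintNegTwo (j : ℕ) :
    (qbinom j).eval qintNegTwo = (-1) ^ j * qint (j + 1) / qq ^ (2 * j) := by
  induction j with
  | zero => simp [qbinom_zero, qint_succ, qint_zero]
  | succ j ih =>
    have := qq_ne_zero
    have : qq * qint j + 1 ≠ 0 := qint_succ j ▸ qint_ne_zero j.succ_ne_zero
    rw [qbinom_succ, eval_mul, eval_mul, ih, eval_C, eval_sub, eval_X, eval_C, qintNegTwo,
      qint_succ (j + 1), qint_succ j]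
    field_simp
    ring

lemma qdiff_sum_qbinom (c : ℕ → RatFunc ℚ) (N : ℕ) :
    qdiff (∑ j ∈ range (N + 1), C (c j) * qbinom j) =
      (1 + C (qq - 1) * X) * ∑ j ∈ range N, C (c (j + 1)) * qbinom j := by
  have hterm : ∀ j, qdiff (C (c j) * qbinom j) = C (c j) * qdiff (qbinom j) := fun j => by
    simp only [qdiff, mul_comp, C_comp]
    ring
  have hsum : qdiff (∑ j ∈ range (N + 1), C (c j) * qbinom j) =
      ∑ j ∈ range (N + 1), qdiff (C (c j) * qbinom j) := by
    simp only [qdiff, Polynomial.sum_comp, sum_sub_distrib]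
  rw [hsum, sum_range_succ', hterm 0, qbinom_zero, qdiff, one_comp, sub_self, mul_zero, add_zero,
    mul_sum]
  refine sum_congr rfl fun j _ => ?_
  rw [hterm, qdiff_qbinom_succ]
  ring

lemma sum_qbinom_comp_qsucc (c : ℕ → RatFunc ℚ) {N : ℕ} (hc : c N = 0) :
    (∑ j ∈ range N, C (c j) * qbinom j).comp qsucc =
      ∑ j ∈ range N, C (qq ^ j * (c j + c (j + 1))) * qbinom j := by
  cases N with
  | zero => simp
  | succ N =>
    have hrhs : ∑ j ∈ range (N + 1), C (qq ^ j * (c j + c (j + 1))) * qbinom j =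
        ∑ j ∈ range N, (C (qq ^ (j + 1) * c (j + 1)) * qbinom (j + 1) +
          C (qq ^ j * c (j + 1)) * qbinom j) + C (c 0) := by
      simp only [mul_add, C_add, add_mul, sum_add_distrib]
      rw [sum_range_succ' (fun j => C (qq ^ j * c j) * qbinom j),
        sum_range_succ (fun j => C (qq ^ j * c (j + 1)) * qbinom j), hc]
      simp only [pow_zero, one_mul, mul_zero, C_0, zero_mul, add_zero, qbinom_zero, mul_one]
      ring
    rw [hrhs, Polynomial.sum_comp, sum_range_succ']
    simp only [mul_comp, C_comp, qbinom_succ_comp_qsucc, qbinom_zero, mul_one, C_mul]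
    congr 1
    refine sum_congr rfl fun j _ => ?_
    ring

theorem natDegree_eq_zero_of_comp_eq_self {R : Type*} [CommRing R] [IsDomain R] {a b : R}
    (ha₀ : a ≠ 0) (ha : ∀ m ≠ 0, a ^ m ≠ 1) {P : R[X]} (h : P.comp (C a * X + C b) = P) :
    P.natDegree = 0 := by
  by_contra hP
  have hlc := leadingCoeff_comp (p := P) (q := C a * X + C b) (by
    rw [natDegree_linear ha₀]; exact one_ne_zero)
  rw [h, leadingCoeff_linear ha₀] at hlc
  have hP₀ : P.leadingCoeff ≠ 0 := leadingCoeff_ne_zero.2 (by rintro rfl; simp at hP)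
  exact ha _ hP (mul_left_cancel₀ hP₀ (by rw [← hlc, mul_one])).symm

lemma eq_of_qdiff_eq {P Q : Polynomial (RatFunc ℚ)} (x : RatFunc ℚ) (h : qdiff P = qdiff Q)
    (hx : P.eval x = Q.eval x) : P = Q := by
  have hfix : (P - Q).comp (C qq * X + C 1) = P - Q := by
    rw [qdiff, qdiff] at h
    rw [C_1, ← qsucc, sub_comp, ← sub_eq_zero]
    linear_combination h
  have hconst := eq_C_of_natDegree_eq_zero
    (natDegree_eq_zero_of_comp_eq_self qq_ne_zero (fun _ => qq_pow_ne_one) hfix)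
  have hx₀ : (P - Q).eval x = 0 := by rw [eval_sub, hx, sub_self]
  rw [hconst, eval_C] at hx₀
  rw [← sub_eq_zero, hconst, hx₀, C_0]

lemma one_add_C_mul_X_comp_qsucc :
    (1 + C (qq - 1) * X).comp qsucc = C qq * (1 + C (qq - 1) * X) := by
  rw [qsucc, add_comp, one_comp, mul_comp, C_comp, X_comp]
  simp only [C_sub, C_1]
  ring

lemma qdiff_of_sub_comp_eq {P Q : Polynomial (RatFunc ℚ)}
    (h : P - P.comp (C qq⁻¹ * X - C qq⁻¹) = (1 + C (qq - 1) * X) * Q) :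
    qdiff P = C qq * (1 + C (qq - 1) * X) * Q.comp qsucc := by
  have hinv : (C qq⁻¹ * X - C qq⁻¹).comp qsucc = X := by
    rw [qsucc, sub_comp, mul_comp, C_comp, X_comp, mul_add, ← mul_assoc, ← C_mul,
      inv_mul_cancel₀ qq_ne_zero, C_1, one_mul, mul_one, add_sub_cancel_right]
  have h' := congrArg (·.comp qsucc) h
  simp only [sub_comp, mul_comp, comp_assoc, hinv, comp_X, one_add_C_mul_X_comp_qsucc] at h'
  rw [qdiff, h']

lemma qdiff_comp_qsucc_of_sub_comp_eq {P Q : Polynomial (RatFunc ℚ)}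
    (h : P - P.comp (C qq⁻¹ * X - C qq⁻¹) = (1 + C (qq - 1) * X) * Q.comp qsucc) :
    qdiff (P.comp qsucc) =
      C (qq ^ 2) * (1 + C (qq - 1) * X) * ((Q.comp qsucc).comp qsucc).comp qsucc := by
  rw [qdiff, ← sub_comp, ← qdiff, qdiff_of_sub_comp_eq h, mul_comp, mul_comp, C_comp,
    one_add_C_mul_X_comp_qsucc, C_pow]
  ring

noncomputable def ballotPoly (n : ℕ) : Polynomial (RatFunc ℚ) :=
  ∑ j ∈ range n, C (ballotCoeff n j) * qbinom j

lemma ballotPoly_one : ballotPoly 1 = 1 := by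
  have h₁₀ : ballotInv 1 0 = 1 := by simpa [fq] using ballotInv_natCast 1 0
  simp [ballotPoly, ballotCoeff, ballotExp, h₁₀, qbinom_zero]

lemma qdiff_ballotPoly_succ (n : ℕ) :
    qdiff (ballotPoly (n + 1)) =
      C (qq ^ 2) * (1 + C (qq - 1) * X) * ((ballotPoly n).comp qsucc).comp qsucc := by
  have hn : ballotCoeff n n = 0 := ballotCoeff_of_le le_rfl
  have hn' : ballotCoeff n (n + 1) = 0 := ballotCoeff_of_le (by omega)
  rw [ballotPoly, qdiff_sum_qbinom (fun j => ballotCoeff (n + 1) j), ballotPoly,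
    sum_qbinom_comp_qsucc (fun j => ballotCoeff n j) hn,
    sum_qbinom_comp_qsucc _ (by push_cast; rw [hn, hn', add_zero, mul_zero]), mul_sum, mul_sum]
  refine sum_congr rfl fun j _ => ?_
  rw [ballotCoeff_succ n (j + 1) (by omega)]
  push_cast
  simp only [add_sub_cancel_right, C_mul, C_add, C_pow, add_assoc, one_add_one_eq_two]
  ring

lemma eval_ballotPoly_succ {n : ℕ} (hn : 1 ≤ n) : (ballotPoly (n + 1)).eval qintNegTwo = 0 := by
  set V : ℕ → RatFunc ℚ := fun m =>
    (-1) ^ m * (qq * qint m * ballotCoeff n m + qint (m + 1) * ballotCoeff n (m - 1)) with hV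
  have hterm : ∀ j : ℕ, ballotCoeff (n + 1) j * ((-1) ^ j * qint (j + 1) / qq ^ (2 * j)) =
      V j - V (j + 1) := fun j => by
    have := qq_ne_zero
    rw [ballotCoeff_succ n j (by omega), hV]
    push_cast
    rw [add_sub_cancel_right, qint_succ (j + 1), qint_succ j]
    field_simp
    ring
  rw [ballotPoly, eval_finsetSum]
  simp only [eval_mul, eval_C, eval_qbinom_qintNegTwo, hterm, sum_range_sub']
  rw [hV]
  simp [qint_zero, ballotCoeff_of_neg, ballotCoeff_of_le]

/-- For all `n ≥ 1`:
`C_n(qx+1|q) = Σ_{j=0}^{n-1} f(n+j, n-1-j|q⁻¹) q^{jn + n(n+1)/2 - (j+1)(j+2)/2} (x choose j)_q`. -/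
theorem statement11 (Cs : ℕ → Polynomial (RatFunc ℚ))
    (h1 : Cs 1 = 1)
    (h2 : ∀ n, 2 ≤ n → (Cs n).eval (-qq⁻¹) = 0)
    (h3 : ∀ n, 1 ≤ n →
      Cs (n + 1) -
          (Cs (n + 1)).comp (Polynomial.C qq⁻¹ * Polynomial.X - Polynomial.C qq⁻¹) =
        (1 + Polynomial.C (qq - 1) * Polynomial.X) *
          (Cs n).comp (Polynomial.C qq * Polynomial.X + 1))
    (n : ℕ) (hn : 1 ≤ n) :
    (Cs n).comp (Polynomial.C qq * Polynomial.X + 1) =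
      ∑ j ∈ Finset.range n,
        Polynomial.C (Polynomial.aeval qq⁻¹ (fq (n + j) (n - 1 - j)) *
          qq ^ (j * n + n * (n + 1) / 2 - (j + 1) * (j + 2) / 2)) * qbinom j := by
  have hcomp : ∀ m, 1 ≤ m → (Cs m).comp qsucc = ballotPoly m := by
    intro m hm
    induction m, hm using Nat.le_induction with
    | base => rw [h1, one_comp, ballotPoly_one]
    | succ m hm ih =>
      refine eq_of_qdiff_eq qintNegTwo ?_ ?_
      · rw [qdiff_comp_qsucc_of_sub_comp_eq (h3 m hm), ih, qdiff_ballotPoly_succ]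
      · rw [eval_comp, eval_qsucc_qintNegTwo, h2 _ (by omega), eval_ballotPoly_succ hm]
  rw [← qsucc, hcomp n hn, ballotPoly]
  exact sum_congr rfl fun j hj => by rw [ballotCoeff_eq_of_lt (mem_range.1 hj)]
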